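/- arXiv:2402.17747 — 7 statements merged into one kernel-verified Lean document; each statement's English description precedes it below -/
import Mathlib

section
/- Let G, G̃ : S⃗ → ℝ be two return functions on a finite set S⃗ of state sequences, let σ(x) = 1/(1+e^{-x}) be the sigmoid, and β > 0. If for all pairs s⃗, s⃗' ∈ S⃗ we have σ(β(G̃(s⃗) − G̃(s⃗'))) = σ(β(G(s⃗) − G(s⃗'))), then there exists a constant c ∈ ℝ such that G̃ = G + c. -/
theorem exists_eq_add_const_of_sub_eq {α M : Type*} [Nonempty α] [AddCommGroup M]
    {f g : α → M} (h : ∀ a b, f a - f b = g a - g b) : ∃ c, ∀ a, f a = g a + c := by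
  obtain ⟨a₀⟩ := ‹Nonempty α›
  exact ⟨f a₀ - g a₀, fun a => eq_add_of_sub_eq' (sub_eq_sub_iff_sub_eq_sub.mp (h a a₀))⟩

theorem stmt_0_general {Sseq : Type*} [Nonempty Sseq]
    (G Gt : Sseq → ℝ) (β : ℝ) (hβ : 0 < β)
    (h : ∀ s s' : Sseq,
      1 / (1 + Real.exp (-(β * (Gt s - Gt s')))) =
      1 / (1 + Real.exp (-(β * (G s - G s'))))) :
    ∃ c : ℝ, ∀ s, Gt s = G s + c := by
  refine exists_eq_add_const_of_sub_eq fun s s' => ?_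
  have hσ := h s s'
  simp only [one_div, ← Real.sigmoid_def, Real.sigmoid_inj] at hσ
  exact mul_left_cancel₀ hβ.ne' hσ

theorem stmt_0 {Sseq : Type*} [Fintype Sseq] [Nonempty Sseq]
    (G Gt : Sseq → ℝ) (β : ℝ) (hβ : 0 < β)
    (h : ∀ s s' : Sseq,
      1 / (1 + Real.exp (-(β * (Gt s - Gt s')))) =
      1 / (1 + Real.exp (-(β * (G s - G s'))))) :
    ∃ c : ℝ, ∀ s, Gt s = G s + c :=
  stmt_0_general G Gt β hβ h
end

section
/- Let B : ℝ^S⃗ → ℝ^Ω⃗ and Γ : ℝ^S → ℝ^S⃗ be linear maps between finite-dimensional real vector spaces, with B mapping constant functions to constant functions (B(c·1) = c·1) and Γ mapping constant functions c to nonzero constants (Γ(c·1) = c·(1−γ^{T+1})/(1−γ)·1 with γ ∈ [0,1)). Let G = Γ(R) and G̃ = Γ(R̃). Then the choice probabilities σ(β((B G̃)(o⃗) − (B G̃)(o⃗'))) agree with σ(β((B G)(o⃗) − (B G)(o⃗'))) for all o⃗, o⃗' if and only if there exists G' ∈ ker B ∩ im Γ and c' ∈ ℝ with G̃ = G + G'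 + c'. -/
theorem stmt_1 {S Sseq Ωseq : Type*} [Fintype S] [Fintype Sseq] [Fintype Ωseq]
    [Nonempty Sseq] [Nonempty Ωseq]
    (B : (Sseq → ℝ) →ₗ[ℝ] (Ωseq → ℝ)) (Γ : (S → ℝ) →ₗ[ℝ] (Sseq → ℝ))
    (γ : ℝ) (hγ0 : 0 ≤ γ) (hγ1 : γ < 1) (T : ℕ)
    (hB : ∀ c : ℝ, B (fun _ => c) = fun _ => c)
    (hΓ : ∀ c : ℝ, Γ (fun _ => c) = fun _ => c * (1 - γ ^ (T + 1)) / (1 - γ))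
    (β : ℝ) (hβ : 0 < β) (R Rt : S → ℝ) :
    (∀ o o' : Ωseq,
        1 / (1 + Real.exp (-(β * (B (Γ Rt) o - B (Γ Rt) o')))) =
        1 / (1 + Real.exp (-(β * (B (Γ R) o - B (Γ R) o'))))) ↔
      ∃ G' ∈ LinearMap.ker B ⊓ LinearMap.range Γ, ∃ c' : ℝ,
        Γ Rt = Γ R + G' + fun _ => c' := by
  have hpow : γ ^ (T + 1) < 1 := pow_lt_one₀ hγ0 hγ1 (Nat.succ_ne_zero T)
  have h1 : (1 : ℝ) - γ ^ (T + 1) ≠ 0 := by linarith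
  have h2 : (1 : ℝ) - γ ≠ 0 := by linarith
  have hcancel : ∀ x : ℝ, x * (1 - γ) / (1 - γ ^ (T + 1)) * (1 - γ ^ (T + 1)) / (1 - γ) = x := by
    intro x
    rw [div_mul_cancel₀ _ h1, mul_div_cancel_right₀ _ h2]
  constructor
  · intro h
    have key : ∀ o o' : Ωseq,
        B (Γ Rt) o - B (Γ Rt) o' = B (Γ R) o - B (Γ R) o' := by
      intro o o'
      have h1 := h o o'
      set a := Real.exp (-(β * (B (Γ Rt) o - B (Γ Rt) o'))) with ha
      set b := Real.exp (-(β * (B (Γ R) o - B (Γ R) o'))) with hb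
      have hap : 0 < a := Real.exp_pos _
      have hbp : 0 < b := Real.exp_pos _
      have hab : a = b := by
        field_simp at h1
        linarith
      have := Real.exp_injective (ha ▸ hb ▸ hab)
      have h2 : β * (B (Γ Rt) o - B (Γ Rt) o') = β * (B (Γ R) o - B (Γ R) o') := by
        linarith [neg_inj.mp this]
      exact mul_left_cancel₀ hβ.ne' h2
    obtain ⟨o₀⟩ := ‹Nonempty Ωseq›
    set c := B (Γ Rt) o₀ - B (Γ R) o₀ with hc
    have hconst : ∀ o, B (Γ Rt) o - B (Γ R) o = c := by
      intro o; have := key o o₀; rw [hc]; linarith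
    refine ⟨Γ Rt - Γ R - (fun _ => c), ⟨?_, ?_⟩, c, ?_⟩
    · simp only [SetLike.mem_coe, LinearMap.mem_ker]
      have : Γ Rt - Γ R - (fun _ => c) = Γ Rt - Γ R - Γ (fun _ => c * (1 - γ) / (1 - γ ^ (T + 1))) := by
        rw [hΓ]
        funext s
        simp only [Pi.sub_apply]
        rw [hcancel c]
      rw [this, map_sub, map_sub, hΓ]
      funext o
      have hB' := congrFun (hB (c * (1 - γ) / (1 - γ ^ (T + 1)) * (1 - γ ^ (T + 1)) / (1 - γ))) o
      simp only [Pi.sub_apply] at *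
      rw [hB']
      rw [hcancel c]
      have := hconst o
      simp only [Pi.zero_apply]
      linarith
    · refine ⟨Rt - R - (fun _ => c * (1 - γ) / (1 - γ ^ (T + 1))), ?_⟩
      rw [map_sub, map_sub, hΓ]
      funext s
      simp only [Pi.sub_apply]
      rw [hcancel c]
    · funext s
      simp only [Pi.add_apply, Pi.sub_apply]
      ring
  · rintro ⟨G', ⟨hker, -⟩, c', heq⟩ o o'
    simp only [SetLike.mem_coe, LinearMap.mem_ker] at hker
    have hR : ∀ x, B (Γ Rt) x = B (Γ R) x + c' := by
      intro x
      have : B (Γ Rt) = B (Γ R) + B G' + B (fun _ => c') := by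
        rw [heq, map_add, map_add]
      rw [this, hker, hB]
      simp
    rw [hR o, hR o']
    ring_nf
end

section
/- Let B : ℝ^S⃗ → ℝ^Ω⃗ be a linear map sending the all-ones vector to the all-ones vector, and Γ : ℝ^S → ℝ^S⃗ a linear map such that Γ applied to a constant function is a nonzero constant function. Then the following are equivalent: (1) ker B ∩ im Γ = {0}; (2) for every reward function R̃ whose induced observation-level differences (B Γ R̃)(o⃗) − (B Γ R̃)(o⃗') agree with those of R for all pairs o⃗, o⃗', one has Γ(R̃) = Γ(R) + c for some constant c. -/
theorem stmt_2 {S Sseq Ωseq : Type*} [Fintype S] [Fintype Sseq] [Fintype Ωseq]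
    [Nonempty Sseq] [Nonempty Ωseq]
    (B : (Sseq → ℝ) →ₗ[ℝ] (Ωseq → ℝ)) (Γ : (S → ℝ) →ₗ[ℝ] (Sseq → ℝ))
    (hB : ∀ c : ℝ, B (fun _ => c) = fun _ => c)
    (hΓ : ∀ c : ℝ, c ≠ 0 → ∃ d : ℝ, d ≠ 0 ∧ Γ (fun _ => c) = fun _ => d)
    (R : S → ℝ) :
    (LinearMap.ker B ⊓ LinearMap.range Γ = ⊥) ↔
      (∀ Rt : S → ℝ,
        (∀ o o' : Ωseq, B (Γ Rt) o - B (Γ Rt) o' = B (Γ R) o - B (Γ R) o') →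
        ∃ c : ℝ, Γ Rt = Γ R + fun _ => c) := by
  obtain ⟨d, hd, hΓ1⟩ := hΓ 1 one_ne_zero
  constructor
  · intro h Rt hRt
    obtain ⟨o₀⟩ := ‹Nonempty Ωseq›
    set c := B (Γ Rt) o₀ - B (Γ R) o₀ with hc
    have hconst : Γ ((c/d) • fun _ => (1:ℝ)) = fun _ => c := by
      rw [map_smul, hΓ1]
      funext s
      simp [div_mul_cancel₀ _ hd]
    have hmem : Γ Rt - Γ R - (fun _ => c) ∈ LinearMap.ker B ⊓ LinearMap.range Γ := by
      refine Submodule.mem_inf.mpr ⟨?_, ?_⟩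
      · rw [LinearMap.mem_ker]
        funext o
        have h1 := hRt o o₀
        have hsub : B (Γ Rt - Γ R - fun _ => c) = B (Γ Rt) - B (Γ R) - B (fun _ => c) := by
          simp [map_sub]
        rw [hsub, hB c]
        simp only [Pi.sub_apply, Pi.zero_apply]
        linarith
      · exact ⟨Rt - R - (c/d) • (fun _ => (1:ℝ)), by rw [map_sub, map_sub, hconst]⟩
    rw [h, Submodule.mem_bot] at hmem
    refine ⟨c, ?_⟩
    funext s
    have := congrFun hmem s
    simp only [Pi.sub_apply, Pi.zero_apply] at this
    simp only [Pi.add_apply]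
    linarith
  · intro h
    rw [eq_bot_iff]
    rintro x hx
    rw [Submodule.mem_inf, LinearMap.mem_ker, LinearMap.mem_range] at hx
    obtain ⟨hxk, u, hu⟩ := hx
    obtain ⟨c, hc⟩ := h (u + R) (by
      intro o o'
      rw [map_add, map_add]
      have h0 : B (Γ u) = 0 := by rw [hu]; exact hxk
      simp only [Pi.add_apply, h0, Pi.zero_apply]
      ring)
    have hΓu : Γ u = fun _ => c := by
      rw [map_add] at hc
      funext s
      have := congrFun hc s
      simp only [Pi.add_apply] at this
      linarith
    have hc0 : c = 0 := by
      obtain ⟨o₀⟩ := ‹Nonempty Ωseq›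
      have hbx : B x = 0 := hxk
      rw [← hu, hΓu, hB c] at hbx
      have := congrFun hbx o₀
      simpa using this
    rw [Submodule.mem_bot, ← hu, hΓu, hc0]
    rfl
end

section
/- Let A, Δ : V → W be linear maps between finite-dimensional real inner product spaces with A injective, ‖Δ‖ ≤ ρ ≤ ‖A‖, and ρ ≤ −‖A‖ + √(‖A‖² + (1/2)‖(AᵀA)^{-1}‖^{-1}). Then (A+Δ)ᵀ(A+Δ) is invertible and ‖((A+Δ)ᵀ(A+Δ))^{-1}(A+Δ)ᵀ − (AᵀA)^{-1}Aᵀ‖ ≤ ρ · ‖(AᵀA)^{-1}‖ · (12‖A‖²‖(AᵀA)^{-1}‖ + 1). -/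
set_option maxHeartbeats 1000000 in
theorem stmt_9 {V W : Type*}
    [NormedAddCommGroup V] [InnerProductSpace ℝ V] [FiniteDimensional ℝ V]
    [NormedAddCommGroup W] [InnerProductSpace ℝ W] [FiniteDimensional ℝ W]
    (A Δ : V →L[ℝ] W) (hA : Function.Injective A) (N : V →L[ℝ] V)
    (hN1 : N.comp ((ContinuousLinearMap.adjoint A).comp A) = ContinuousLinearMap.id ℝ V)
    (hN2 : ((ContinuousLinearMap.adjoint A).comp A).comp N = ContinuousLinearMap.id ℝ V)
    (ρ : ℝ) (hΔ : ‖Δ‖ ≤ ρ) (hρ1 : ρ ≤ ‖A‖)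
    (hρ2 : ρ ≤ -‖A‖ + Real.sqrt (‖A‖ ^ 2 + (1 / 2) * ‖N‖⁻¹)) :
    ∃ M : V →L[ℝ] V,
      M.comp ((ContinuousLinearMap.adjoint (A + Δ)).comp (A + Δ)) = ContinuousLinearMap.id ℝ V ∧
      ((ContinuousLinearMap.adjoint (A + Δ)).comp (A + Δ)).comp M = ContinuousLinearMap.id ℝ V ∧
      ‖M.comp (ContinuousLinearMap.adjoint (A + Δ)) - N.comp (ContinuousLinearMap.adjoint A)‖ ≤
        ρ * ‖N‖ * (12 * ‖A‖ ^ 2 * ‖N‖ + 1) := by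
  have hρ0 : 0 ≤ ρ := le_trans (norm_nonneg Δ) hΔ
  have hA0 : 0 ≤ ‖A‖ := norm_nonneg A
  have hN0 : 0 ≤ ‖N‖ := norm_nonneg N
  set S : V →L[ℝ] V := (ContinuousLinearMap.adjoint A).comp A with hS
  set T : V →L[ℝ] V := (ContinuousLinearMap.adjoint (A + Δ)).comp (A + Δ) with hT
  set E : V →L[ℝ] V := T - S with hEdef
  have hadjnorm : ∀ (B : V →L[ℝ] W), ‖ContinuousLinearMap.adjoint B‖ = ‖B‖ := fun B =>
    LinearIsometryEquiv.norm_map _ B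
  have hEeq : E = (ContinuousLinearMap.adjoint A).comp Δ +
      (ContinuousLinearMap.adjoint Δ).comp A + (ContinuousLinearMap.adjoint Δ).comp Δ := by
    rw [hEdef, hT, hS, map_add]
    ext x
    simp [ContinuousLinearMap.add_comp, ContinuousLinearMap.comp_add]
    abel
  have hE : ‖E‖ ≤ 2 * ‖A‖ * ρ + ρ ^ 2 := by
    rw [hEeq]
    have h1 := norm_add_le ((ContinuousLinearMap.adjoint A).comp Δ +
      (ContinuousLinearMap.adjoint Δ).comp A) ((ContinuousLinearMap.adjoint Δ).comp Δ)
    have h2 := norm_add_le ((ContinuousLinearMap.adjoint A).comp Δ)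
      ((ContinuousLinearMap.adjoint Δ).comp A)
    have h3 := ContinuousLinearMap.opNorm_comp_le (ContinuousLinearMap.adjoint A) Δ
    have h4 := ContinuousLinearMap.opNorm_comp_le (ContinuousLinearMap.adjoint Δ) A
    have h5 := ContinuousLinearMap.opNorm_comp_le (ContinuousLinearMap.adjoint Δ) Δ
    rw [hadjnorm A] at h3; rw [hadjnorm Δ] at h4 h5
    nlinarith [norm_nonneg Δ, norm_nonneg ((ContinuousLinearMap.adjoint A).comp Δ)]
  have hkey : ‖N‖ * ‖E‖ ≤ 1 / 2 := by
    rcases eq_or_lt_of_le hN0 with h0 | hNpos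
    · rw [← h0, zero_mul]; norm_num
    · have hsq : (ρ + ‖A‖) ^ 2 ≤ ‖A‖ ^ 2 + (1 / 2) * ‖N‖⁻¹ := by
        have h := Real.sq_sqrt (by positivity : (0:ℝ) ≤ ‖A‖ ^ 2 + (1 / 2) * ‖N‖⁻¹)
        nlinarith [Real.sqrt_nonneg (‖A‖ ^ 2 + (1 / 2) * ‖N‖⁻¹)]
      have h2 : 2 * ‖A‖ * ρ + ρ ^ 2 ≤ (1 / 2) * ‖N‖⁻¹ := by nlinarith
      have := mul_le_mul_of_nonneg_left (hE.trans h2) hN0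
      rwa [mul_comm (1/2 : ℝ) ‖N‖⁻¹, ← mul_assoc, mul_inv_cancel₀ (ne_of_gt hNpos), one_mul]
        at this
  have hNE : ‖N * E‖ < 1 := by
    calc ‖N * E‖ ≤ ‖N‖ * ‖E‖ := norm_mul_le N E
    _ ≤ 1/2 := hkey
    _ < 1 := by norm_num
  have hEN : ‖E * N‖ < 1 := by
    calc ‖E * N‖ ≤ ‖E‖ * ‖N‖ := norm_mul_le E N
    _ = ‖N‖ * ‖E‖ := mul_comm _ _
    _ ≤ 1/2 := hkey
    _ < 1 := by norm_num
  have hNS : N * S = 1 := hN1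
  have hSN : S * N = 1 := hN2
  set u : (V →L[ℝ] V)ˣ := Units.oneSub (-(N * E)) (by rwa [norm_neg]) with hu
  set u' : (V →L[ℝ] V)ˣ := Units.oneSub (-(E * N)) (by rwa [norm_neg]) with hu'
  have huval : (u : V →L[ℝ] V) = 1 + N * E := by rw [hu, Units.val_oneSub, sub_neg_eq_add]
  have hu'val : (u' : V →L[ℝ] V) = 1 + E * N := by rw [hu', Units.val_oneSub, sub_neg_eq_add]
  set M : V →L[ℝ] V := (↑u⁻¹ : V →L[ℝ] V) * N with hM
  have hTSE : T = S + E := by rw [hEdef]; abel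
  have hNT : N * T = (u : V →L[ℝ] V) := by rw [hTSE, mul_add, hNS, huval]
  have hTN : T * N = (u' : V →L[ℝ] V) := by rw [hTSE, add_mul, hSN, hu'val]
  have hMT : M * T = 1 := by rw [hM, mul_assoc, hNT, Units.inv_mul]
  have hTM : T * M = 1 := by
    set M' : V →L[ℝ] V := N * (↑u'⁻¹ : V →L[ℝ] V) with hM'
    have hTM' : T * M' = 1 := by rw [hM', ← mul_assoc, hTN, Units.mul_inv]
    have hMM' : M = M' := by
      calc M = M * (T * M') := by rw [hTM', mul_one]
      _ = (M * T) * M' := (mul_assoc M T M').symm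
      _ = M' := by rw [hMT, one_mul]
    rw [hMM', hTM']
  have hMN : M - N = -(M * E * N) := by
    have h1 : M * (S * N) = M := by rw [hSN, mul_one]
    have h2 : (M * T) * N = N := by rw [hMT, one_mul]
    calc M - N = M * (S * N) - (M * T) * N := by rw [h1, h2]
    _ = -(M * E * N) := by rw [hTSE]; noncomm_ring
  have hMEN : ‖M * E * N‖ ≤ ‖M‖ * ‖E‖ * ‖N‖ := by
    calc ‖M * E * N‖ ≤ ‖M * E‖ * ‖N‖ := norm_mul_le _ _
    _ ≤ ‖M‖ * ‖E‖ * ‖N‖ := by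
        have := norm_mul_le M E
        nlinarith [norm_nonneg N]
  have hMnorm : ‖M‖ ≤ 2 * ‖N‖ := by
    have heq : M = N + -(M * E * N) := by rw [← hMN]; abel
    have h := norm_add_le N (-(M * E * N))
    rw [← heq, norm_neg] at h
    nlinarith [norm_nonneg M, norm_nonneg E]
  have hMNnorm : ‖M - N‖ ≤ 6 * ρ * ‖A‖ * ‖N‖ ^ 2 := by
    rw [hMN, norm_neg]
    have hE3 : ‖E‖ ≤ 3 * ‖A‖ * ρ := by nlinarith
    calc ‖M * E * N‖ ≤ ‖M‖ * ‖E‖ * ‖N‖ := hMEN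
    _ ≤ 6 * ρ * ‖A‖ * ‖N‖ ^ 2 := by
        have hME : ‖M‖ * ‖E‖ ≤ 2 * ‖N‖ * (3 * ‖A‖ * ρ) :=
          mul_le_mul hMnorm hE3 (norm_nonneg E) (by positivity)
        nlinarith [mul_le_mul_of_nonneg_right hME hN0, norm_nonneg M, norm_nonneg E]
  refine ⟨M, hMT, hTM, ?_⟩
  have hD : M.comp (ContinuousLinearMap.adjoint (A + Δ)) - N.comp (ContinuousLinearMap.adjoint A)
      = (M - N).comp (ContinuousLinearMap.adjoint (A + Δ)) +
        N.comp (ContinuousLinearMap.adjoint Δ) := by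
    simp only [map_add, ContinuousLinearMap.sub_comp, ContinuousLinearMap.comp_add]
    abel
  rw [hD]
  have h1 := norm_add_le ((M - N).comp (ContinuousLinearMap.adjoint (A + Δ)))
    (N.comp (ContinuousLinearMap.adjoint Δ))
  have h2 := ContinuousLinearMap.opNorm_comp_le (M - N) (ContinuousLinearMap.adjoint (A + Δ))
  have h3 := ContinuousLinearMap.opNorm_comp_le N (ContinuousLinearMap.adjoint Δ)
  rw [hadjnorm] at h2 h3
  have hB : ‖A + Δ‖ ≤ 2 * ‖A‖ := le_trans (norm_add_le A Δ) (by linarith)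
  nlinarith [norm_nonneg (M - N), norm_nonneg ((M - N).comp (ContinuousLinearMap.adjoint (A + Δ)))]
end

section
/- Let G, G_obs : S⃗ → ℝ and, for each policy π in some set Π, let P^π be a probability distribution on S⃗. Define J(π) = E_{P^π}[G], J_obs(π) = E_{P^π}[G_obs], Ē⁺(π) = E_{P^π}[max(0, G_obs − G)], Ē⁻(π) = E_{P^π}[max(0, G − G_obs)]. If π and π_ref satisfy J(π) < J(π_ref) and J_obs(π) ≥ J_obs(π_ref), then at least one of the following holds: (a) Ē⁺(π) > Ē⁺(π_ref), or (b) Ē⁻(π) < Ē⁻(π_ref). -/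
theorem stmt_11 {Sseq Pol : Type*} [Fintype Sseq]
    (G Gobs : Sseq → ℝ) (P : Pol → Sseq → ℝ)
    (hP0 : ∀ π s, 0 ≤ P π s) (hP1 : ∀ π, ∑ s, P π s = 1)
    (π πref : Pol)
    (hJ : ∑ s, P π s * G s < ∑ s, P πref s * G s)
    (hJobs : ∑ s, P πref s * Gobs s ≤ ∑ s, P π s * Gobs s) :
    (∑ s, P πref s * max 0 (Gobs s - G s) < ∑ s, P π s * max 0 (Gobs s - G s)) ∨
      (∑ s, P π s * max 0 (G s - Gobs s) < ∑ s, P πref s * max 0 (G s - Gobs s)) := by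
  have key : ∀ ρ : Pol, ∑ s, P ρ s * max 0 (Gobs s - G s) - ∑ s, P ρ s * max 0 (G s - Gobs s)
      = ∑ s, P ρ s * Gobs s - ∑ s, P ρ s * G s := by
    intro ρ
    rw [← Finset.sum_sub_distrib, ← Finset.sum_sub_distrib]
    refine Finset.sum_congr rfl fun s _ => ?_
    rcases le_total (G s) (Gobs s) with h | h
    · rw [max_eq_right (by linarith), max_eq_left (by linarith)]; ring
    · rw [max_eq_left (by linarith), max_eq_right (by linarith)]; ring
  by_contra hc
  push_neg at hc
  have h1 := key π
  have h2 := key πref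
  obtain ⟨ha, hb⟩ := hc
  linarith
end

section
/- Suppose there exists an enumeration s⃗^(1), s⃗^(2), … of the finite set S⃗ of state sequences (each of length T+1 over state set S) and a function φ : S⃗ → S such that φ(s⃗) occurs in s⃗ and φ(s⃗^(k)) does not occur in s⃗^(i) for any i < k. Then the return operator Γ : ℝ^S → ℝ^S⃗, Γ(R)(s⃗) = Σ_{t=0}^T γ^t R(s_t) with γ > 0, is surjective; that is, every G : S⃗ → ℝ equals Γ(R) for some reward R : S → ℝ. -/
open Finset

noncomputable def Rstep {S Sseq : Type*} [DecidableEq S]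
    (T : ℕ) (seq : Sseq → Fin (T + 1) → S) (γ : ℝ) (G : Sseq → ℝ)
    (φ : Sseq → S) (v : Sseq) (R : S → ℝ) : S → ℝ :=
  Function.update R (φ v)
    ((G v - ∑ t ∈ univ.filter (fun t : Fin (T + 1) => seq v t ≠ φ v),
        γ ^ (t : ℕ) * R (seq v t)) /
      ∑ t ∈ univ.filter (fun t : Fin (T + 1) => seq v t = φ v), γ ^ (t : ℕ))

lemma Rstep_eq {S Sseq : Type*} [DecidableEq S]
    (T : ℕ) (seq : Sseq → Fin (T + 1) → S) (γ : ℝ) (hγ : 0 < γ)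
    (G : Sseq → ℝ) (φ : Sseq → S) (v : Sseq) (hv : ∃ t, seq v t = φ v)
    (R : S → ℝ) :
    ∑ t : Fin (T + 1), γ ^ (t : ℕ) * Rstep T seq γ G φ v R (seq v t) = G v := by
  have hc : 0 < ∑ t ∈ univ.filter (fun t : Fin (T + 1) => seq v t = φ v), γ ^ (t : ℕ) := by
    obtain ⟨t, ht⟩ := hv
    apply Finset.sum_pos (fun i _ => pow_pos hγ _)
    exact ⟨t, by simp [ht]⟩
  rw [← Finset.sum_filter_add_sum_filter_not univ (fun t : Fin (T + 1) => seq v t = φ v)]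
  have h1 : ∑ t ∈ univ.filter (fun t : Fin (T + 1) => seq v t = φ v),
      γ ^ (t : ℕ) * Rstep T seq γ G φ v R (seq v t)
      = (∑ t ∈ univ.filter (fun t : Fin (T + 1) => seq v t = φ v), γ ^ (t : ℕ)) *
        ((G v - ∑ t ∈ univ.filter (fun t : Fin (T + 1) => seq v t ≠ φ v),
            γ ^ (t : ℕ) * R (seq v t)) /
          ∑ t ∈ univ.filter (fun t : Fin (T + 1) => seq v t = φ v), γ ^ (t : ℕ)) := by
    rw [Finset.sum_mul]
    apply Finset.sum_congr rfl
    intro t ht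
    simp only [mem_filter] at ht
    rw [Rstep, ht.2, Function.update_self]
  have h2 : ∑ t ∈ univ.filter (fun t : Fin (T + 1) => ¬ seq v t = φ v),
      γ ^ (t : ℕ) * Rstep T seq γ G φ v R (seq v t)
      = ∑ t ∈ univ.filter (fun t : Fin (T + 1) => seq v t ≠ φ v),
          γ ^ (t : ℕ) * R (seq v t) := by
    apply Finset.sum_congr rfl
    intro t ht
    simp only [mem_filter] at ht
    rw [Rstep, Function.update_of_ne ht.2]
  rw [h1, h2, mul_div_cancel₀ _ (ne_of_gt hc)]
  ring

lemma Rstep_ne {S Sseq : Type*} [DecidableEq S]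
    (T : ℕ) (seq : Sseq → Fin (T + 1) → S) (γ : ℝ)
    (G : Sseq → ℝ) (φ : Sseq → S) (v w : Sseq) (hw : ∀ t, seq w t ≠ φ v)
    (R : S → ℝ) :
    ∑ t : Fin (T + 1), γ ^ (t : ℕ) * Rstep T seq γ G φ v R (seq w t)
      = ∑ t : Fin (T + 1), γ ^ (t : ℕ) * R (seq w t) := by
  apply Finset.sum_congr rfl
  intro t _
  rw [Rstep, Function.update_of_ne (hw t)]

noncomputable def RK {S Sseq : Type*} [DecidableEq S]
    (T : ℕ) (seq : Sseq → Fin (T + 1) → S) (γ : ℝ) (G : Sseq → ℝ)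
    (φ : Sseq → S) (n : ℕ) (e : Fin n → Sseq) : ℕ → S → ℝ
  | 0 => 0
  | k + 1 =>
    if h : k < n then Rstep T seq γ G φ (e ⟨k, h⟩) (RK T seq γ G φ n e k)
    else RK T seq γ G φ n e k

theorem stmt_16 {S Sseq : Type*} [Fintype S] [Fintype Sseq]
    (T : ℕ) (seq : Sseq → Fin (T + 1) → S) (γ : ℝ) (hγ : 0 < γ)
    (n : ℕ) (e : Fin n ≃ Sseq) (φ : Sseq → S)
    (hφ : ∀ v, ∃ t, seq v t = φ v)
    (hnew : ∀ i k : Fin n, i < k → ∀ t, seq (e i) t ≠ φ (e k)) :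
    ∀ G : Sseq → ℝ, ∃ R : S → ℝ,
      ∀ v, ∑ t : Fin (T + 1), γ ^ (t : ℕ) * R (seq v t) = G v := by
  classical
  intro G
  refine ⟨RK T seq γ G φ n ⇑e n, ?_⟩
  have key : ∀ m : ℕ, ∀ k : Fin n, (k : ℕ) < m →
      ∑ t : Fin (T + 1), γ ^ (t : ℕ) * RK T seq γ G φ n ⇑e m (seq (e k) t) = G (e k) := by
    intro m
    induction m with
    | zero => intro k hk; omega
    | succ m ih =>
      intro k hk
      rcases lt_or_eq_of_le (Nat.lt_succ_iff.mp hk) with h | h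
      · -- k < m, step m preserves
        by_cases hm : m < n
        · rw [RK, dif_pos hm, Rstep_ne]
          · exact ih k h
          · exact hnew k ⟨m, hm⟩ h
        · rw [RK, dif_neg hm]
          exact ih k h
      · -- k = m
        have hm : m < n := h ▸ k.2
        have hk' : k = (⟨m, hm⟩ : Fin n) := Fin.ext h
        rw [RK, dif_pos hm, hk']
        exact Rstep_eq T seq γ hγ G φ (e ⟨m, hm⟩) (hφ _) _
  intro v
  have := key n (e.symm v) (e.symm v).2
  simpa using this
end

section
/- Let B : ℝ^S⃗ → ℝ^Ω⃗ and Γ : ℝ^S → ℝ^S⃗ be linear with ker B ∩ im Γ = {0}, and let B| denote the restriction of B to the subspace im Γ. Let Δ be a perturbation with ‖Δ‖ ≤ ρ where ρ ≤ ‖B|‖ and ρ ≤ −‖B|‖ + √(‖B|‖² + (1/2)‖(B|ᵀB|)^{-1}‖^{-1}). Let G ∈ im Γ and define G̃ = ((B|+Δ|)ᵀ(B|+Δ|))^{-1}(B|+Δ|)ᵀ (B G), where Δ| is Δ restricted to im Γ. Then (B|+Δ|)ᵀ(B|+Δ|) is invertible and ‖G̃ − G‖ ≤ ρ · ‖G‖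 · Q(‖(B|ᵀB|)^{-1}‖, ‖B|‖) where Q(X,Y) = XY(12XY² + 1). -/
/-!
The Gram operator of `B + Δ` differs from that of `B` by `E = B†Δ + Δ†B + Δ†Δ`, of norm at most
`2‖B‖ρ + ρ²`, and the hypothesis on `ρ` gives `‖N‖ ‖E‖ ≤ 1/2`, where `N = (B†B)⁻¹`.
A Neumann-series perturbation argument then makes `(B + Δ)†(B + Δ)` invertible with inverse `M`
of norm at most `2‖N‖`. Since `M (B + Δ)†(B + Δ) G = G`, the error is `-M (B + Δ)† Δ G`, of norm
at most `2‖N‖ · 2‖B‖ · ρ‖G‖`; here `ρ ≤ ‖B‖` follows from the hypothesis on `ρ` together with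
`1 ≤ ‖N‖ ‖B‖²`.
-/

namespace Units

variable {R : Type*} [NormedRing R] [HasSummableGeomSeries R]

theorem exists_val_eq_add_norm_inv_le (u : Rˣ) (e : R) (he : ‖(↑u⁻¹ : R)‖ * ‖e‖ ≤ 1 / 2) :
    ∃ v : Rˣ, (v : R) = u + e ∧ ‖(↑v⁻¹ : R)‖ ≤ 2 * ‖(↑u⁻¹ : R)‖ := by
  rcases subsingleton_or_nontrivial R with _ | _
  · exact ⟨u, Subsingleton.elim _ _, by simp [Subsingleton.elim (↑u⁻¹ : R) 0]⟩
  have hu : 0 < ‖(↑u⁻¹ : R)‖ := Units.norm_pos u⁻¹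
  have he' : ‖e‖ < ‖(↑u⁻¹ : R)‖⁻¹ := by
    rw [← one_div, lt_div_iff₀ hu]
    linarith
  set v := u.add e he'
  refine ⟨v, rfl, ?_⟩
  -- second resolvent identity `v⁻¹ - u⁻¹ = v⁻¹ (u - v) u⁻¹`
  have hres : (↑v⁻¹ : R) = ↑u⁻¹ - ↑v⁻¹ * e * ↑u⁻¹ := by
    rw [eq_sub_iff_add_eq]
    calc (↑v⁻¹ : R) + ↑v⁻¹ * e * ↑u⁻¹ = ↑v⁻¹ * (u + e) * ↑u⁻¹ := by
          rw [mul_add, add_mul, mul_assoc _ (u : R), Units.mul_inv, mul_one]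
      _ = ↑v⁻¹ * v * ↑u⁻¹ := rfl
      _ = ↑u⁻¹ := by rw [Units.inv_mul, one_mul]
  have : ‖(↑v⁻¹ : R)‖ ≤ ‖(↑u⁻¹ : R)‖ + ‖(↑v⁻¹ : R)‖ * (‖(↑u⁻¹ : R)‖ * ‖e‖) :=
    calc ‖(↑v⁻¹ : R)‖ = ‖↑u⁻¹ - ↑v⁻¹ * e * ↑u⁻¹‖ := congrArg _ hres
      _ ≤ ‖(↑u⁻¹ : R)‖ + ‖↑v⁻¹ * e * ↑u⁻¹‖ := norm_sub_le _ _
      _ ≤ ‖(↑u⁻¹ : R)‖ + ‖(↑v⁻¹ : R)‖ * ‖e‖ * ‖(↑u⁻¹ : R)‖ := by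
          grw [norm_mul_le, norm_mul_le]
      _ = _ := by ring
  nlinarith [norm_nonneg (↑v⁻¹ : R)]

end Units

namespace ContinuousLinearMap

variable {E F : Type*} [NormedAddCommGroup E] [InnerProductSpace ℝ E] [CompleteSpace E]
  [NormedAddCommGroup F] [InnerProductSpace ℝ F] [CompleteSpace F]

theorem norm_gram_add_sub_gram_le (B Δ : E →L[ℝ] F) :
    ‖adjoint (B + Δ) ∘L (B + Δ) - adjoint B ∘L B‖ ≤ 2 * ‖B‖ * ‖Δ‖ + ‖Δ‖ ^ 2 := by
  have hexpand : adjoint (B + Δ) ∘L (B + Δ) - adjoint B ∘L B =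
      adjoint B ∘L Δ + adjoint Δ ∘L B + adjoint Δ ∘L Δ := by
    simp only [map_add, add_comp, comp_add]
    abel
  have hcomp : ∀ X Y : E →L[ℝ] F, ‖adjoint X ∘L Y‖ ≤ ‖X‖ * ‖Y‖ := fun X Y =>
    (opNorm_comp_le _ _).trans_eq (by rw [LinearIsometryEquiv.norm_map])
  calc ‖adjoint (B + Δ) ∘L (B + Δ) - adjoint B ∘L B‖
      ≤ ‖adjoint B ∘L Δ‖ + ‖adjoint Δ ∘L B‖ + ‖adjoint Δ ∘L Δ‖ := hexpand ▸ norm_add₃_le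
    _ ≤ ‖B‖ * ‖Δ‖ + ‖Δ‖ * ‖B‖ + ‖Δ‖ * ‖Δ‖ := by gcongr <;> exact hcomp _ _
    _ = 2 * ‖B‖ * ‖Δ‖ + ‖Δ‖ ^ 2 := by ring

theorem one_le_norm_mul_norm_sq [Nontrivial E] {B : E →L[ℝ] F} {N : E →L[ℝ] E}
    (hN : N ∘L (adjoint B ∘L B) = .id ℝ E) : 1 ≤ ‖N‖ * ‖B‖ ^ 2 :=
  calc 1 = ‖N ∘L (adjoint B ∘L B)‖ := by rw [hN, norm_id]
    _ ≤ ‖N‖ * ‖adjoint B ∘L B‖ := opNorm_comp_le _ _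
    _ = ‖N‖ * ‖B‖ ^ 2 := by rw [norm_adjoint_comp_self, sq]

theorem exists_inverse_gram_add {B Δ : E →L[ℝ] F} {N : E →L[ℝ] E}
    (hN₁ : N ∘L (adjoint B ∘L B) = .id ℝ E) (hN₂ : (adjoint B ∘L B) ∘L N = .id ℝ E)
    (hΔ : ‖N‖ * (2 * ‖B‖ * ‖Δ‖ + ‖Δ‖ ^ 2) ≤ 1 / 2) :
    ∃ M : E →L[ℝ] E, M ∘L (adjoint (B + Δ) ∘L (B + Δ)) = .id ℝ E ∧
      (adjoint (B + Δ) ∘L (B + Δ)) ∘L M = .id ℝ E ∧ ‖M‖ ≤ 2 * ‖N‖ := by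
  let u : (E →L[ℝ] E)ˣ := ⟨adjoint B ∘L B, N, hN₂, hN₁⟩
  obtain ⟨v, hv, hv_inv⟩ :=
    u.exists_val_eq_add_norm_inv_le (adjoint (B + Δ) ∘L (B + Δ) - adjoint B ∘L B)
    ((mul_le_mul_of_nonneg_left (norm_gram_add_sub_gram_le B Δ) (norm_nonneg N)).trans hΔ)
  have hv' : (v : E →L[ℝ] E) = adjoint (B + Δ) ∘L (B + Δ) := hv.trans (add_sub_cancel _ _)
  exact ⟨↑v⁻¹, hv' ▸ v.inv_mul, hv' ▸ v.mul_inv, hv_inv⟩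

theorem inverse_gram_add_apply_sub {B Δ : E →L[ℝ] F} {M : E →L[ℝ] E}
    (hM : M ∘L (adjoint (B + Δ) ∘L (B + Δ)) = .id ℝ E) (G : E) :
    M (adjoint (B + Δ) (B G)) - G = -M (adjoint (B + Δ) (Δ G)) := by
  have hG : M (adjoint (B + Δ) ((B + Δ) G)) = G := congrArg (· G) hM
  calc M (adjoint (B + Δ) (B G)) - G
      = M (adjoint (B + Δ) (B G)) - M (adjoint (B + Δ) ((B + Δ) G)) := by rw [hG]
    _ = -M (adjoint (B + Δ) (Δ G)) := by
      rw [add_apply, map_add (adjoint (B + Δ)), map_add M, sub_add_cancel_left]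

theorem exists_inverse_perturbed_gram_error_le (B Δ : E →L[ℝ] F) (N : E →L[ℝ] E)
    (hN₁ : N ∘L (adjoint B ∘L B) = .id ℝ E) (hN₂ : (adjoint B ∘L B) ∘L N = .id ℝ E)
    {ρ : ℝ} (hΔ : ‖Δ‖ ≤ ρ) (hρ : ρ ≤ -‖B‖ + √(‖B‖ ^ 2 + 1 / 2 * ‖N‖⁻¹)) (G : E) :
    ∃ M : E →L[ℝ] E, M ∘L (adjoint (B + Δ) ∘L (B + Δ)) = .id ℝ E ∧
      (adjoint (B + Δ) ∘L (B + Δ)) ∘L M = .id ℝ E ∧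
      ‖M (adjoint (B + Δ) (B G)) - G‖ ≤ ρ * ‖G‖ * (‖N‖ * ‖B‖ * (12 * ‖N‖ * ‖B‖ ^ 2 + 1)) := by
  rcases subsingleton_or_nontrivial E with _ | _
  · exact ⟨0, Subsingleton.elim _ _, Subsingleton.elim _ _, by simp [Subsingleton.elim G 0]⟩
  have hρ₀ : 0 ≤ ρ := (norm_nonneg Δ).trans hΔ
  have hNB := one_le_norm_mul_norm_sq hN₁
  have hN₀ : 0 < ‖N‖ := by
    by_contra! h
    nlinarith [norm_nonneg N]
  have hsmall : 2 * ‖B‖ * ρ + ρ ^ 2 ≤ 1 / 2 * ‖N‖⁻¹ := by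
    have := (Real.le_sqrt (by positivity) (by positivity)).1
      (by linarith : ρ + ‖B‖ ≤ √(‖B‖ ^ 2 + 1 / 2 * ‖N‖⁻¹))
    nlinarith
  have hρB : ρ ≤ ‖B‖ := by
    have : ‖N‖⁻¹ ≤ ‖B‖ ^ 2 := by rw [inv_le_iff_one_le_mul₀ hN₀, mul_comm]; exact hNB
    nlinarith [norm_nonneg B]
  obtain ⟨M, hM₁, hM₂, hMN⟩ := exists_inverse_gram_add hN₁ hN₂ <|
    calc ‖N‖ * (2 * ‖B‖ * ‖Δ‖ + ‖Δ‖ ^ 2) ≤ ‖N‖ * (2 * ‖B‖ * ρ + ρ ^ 2) := by gcongr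
      _ ≤ ‖N‖ * (1 / 2 * ‖N‖⁻¹) := by gcongr
      _ = 1 / 2 := by field_simp
  refine ⟨M, hM₁, hM₂, ?_⟩
  rw [inverse_gram_add_apply_sub hM₁, norm_neg]
  calc ‖M (adjoint (B + Δ) (Δ G))‖ ≤ ‖M‖ * (‖adjoint (B + Δ)‖ * (‖Δ‖ * ‖G‖)) := by
        grw [le_opNorm, le_opNorm, le_opNorm]
    _ ≤ 2 * ‖N‖ * ((‖B‖ + ‖B‖) * (ρ * ‖G‖)) := by
        rw [LinearIsometryEquiv.norm_map]
        gcongr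
        exact (norm_add_le B Δ).trans (by linarith)
    _ ≤ ρ * ‖G‖ * (‖N‖ * ‖B‖ * (12 * ‖N‖ * ‖B‖ ^ 2 + 1)) := by
        have : 0 ≤ ρ * ‖G‖ * (‖N‖ * ‖B‖) := by positivity
        nlinarith

end ContinuousLinearMap

set_option maxHeartbeats 1000000 in
open ContinuousLinearMap in
theorem stmt_18_general {S Sseq Ωseq : Type*} [Fintype S] [Fintype Sseq] [Fintype Ωseq]
    (B Δ : EuclideanSpace ℝ Sseq →L[ℝ] EuclideanSpace ℝ Ωseq)
    (Γ : EuclideanSpace ℝ S →L[ℝ] EuclideanSpace ℝ Sseq)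
    (Bres Δres : (LinearMap.range (Γ : EuclideanSpace ℝ S →ₗ[ℝ] EuclideanSpace ℝ Sseq) : Submodule ℝ (EuclideanSpace ℝ Sseq)) →L[ℝ]
      EuclideanSpace ℝ Ωseq)
    (hBres : Bres = B.comp (LinearMap.range (Γ : EuclideanSpace ℝ S →ₗ[ℝ] EuclideanSpace ℝ Sseq)).subtypeL)
    (hΔres : Δres = Δ.comp (LinearMap.range (Γ : EuclideanSpace ℝ S →ₗ[ℝ] EuclideanSpace ℝ Sseq)).subtypeL)
    (N : (LinearMap.range (Γ : EuclideanSpace ℝ S →ₗ[ℝ] EuclideanSpace ℝ Sseq) : Submodule ℝ (EuclideanSpace ℝ Sseq)) →L[ℝ]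
      (LinearMap.range (Γ : EuclideanSpace ℝ S →ₗ[ℝ] EuclideanSpace ℝ Sseq) : Submodule ℝ (EuclideanSpace ℝ Sseq)))
    (hN1 : N.comp ((adjoint Bres).comp Bres) = ContinuousLinearMap.id ℝ _)
    (hN2 : ((adjoint Bres).comp Bres).comp N = ContinuousLinearMap.id ℝ _)
    (ρ : ℝ) (hΔ : ‖Δ‖ ≤ ρ)
    (hρ2 : ρ ≤ -‖Bres‖ + Real.sqrt (‖Bres‖ ^ 2 + (1 / 2) * ‖N‖⁻¹))
    (G : (LinearMap.range (Γ : EuclideanSpace ℝ S →ₗ[ℝ] EuclideanSpace ℝ Sseq) : Submodule ℝ (EuclideanSpace ℝ Sseq))) :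
    ∃ M : (LinearMap.range (Γ : EuclideanSpace ℝ S →ₗ[ℝ] EuclideanSpace ℝ Sseq) : Submodule ℝ (EuclideanSpace ℝ Sseq)) →L[ℝ]
        (LinearMap.range (Γ : EuclideanSpace ℝ S →ₗ[ℝ] EuclideanSpace ℝ Sseq) : Submodule ℝ (EuclideanSpace ℝ Sseq)),
      M.comp ((adjoint (Bres + Δres)).comp (Bres + Δres)) = ContinuousLinearMap.id ℝ _ ∧
      ((adjoint (Bres + Δres)).comp (Bres + Δres)).comp M = ContinuousLinearMap.id ℝ _ ∧
      ‖M ((adjoint (Bres + Δres)) (B (G : EuclideanSpace ℝ Sseq))) - G‖ ≤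
        ρ * ‖G‖ * (‖N‖ * ‖Bres‖ * (12 * ‖N‖ * ‖Bres‖ ^ 2 + 1)) := by
  subst hBres hΔres
  refine exists_inverse_perturbed_gram_error_le _ _ N hN1 hN2 ?_ hρ2 G
  exact (opNorm_comp_le _ _).trans
    ((mul_le_of_le_one_right (norm_nonneg Δ) (Submodule.norm_subtypeL_le _)).trans hΔ)

set_option maxHeartbeats 1000000 in
open ContinuousLinearMap in
theorem stmt_18 {S Sseq Ωseq : Type*} [Fintype S] [Fintype Sseq] [Fintype Ωseq]
    (B Δ : EuclideanSpace ℝ Sseq →L[ℝ] EuclideanSpace ℝ Ωseq)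
    (Γ : EuclideanSpace ℝ S →L[ℝ] EuclideanSpace ℝ Sseq)
    (hker : LinearMap.ker (B : EuclideanSpace ℝ Sseq →ₗ[ℝ] EuclideanSpace ℝ Ωseq) ⊓ LinearMap.range (Γ : EuclideanSpace ℝ S →ₗ[ℝ] EuclideanSpace ℝ Sseq) = ⊥)
    (Bres Δres : (LinearMap.range (Γ : EuclideanSpace ℝ S →ₗ[ℝ] EuclideanSpace ℝ Sseq) : Submodule ℝ (EuclideanSpace ℝ Sseq)) →L[ℝ]
      EuclideanSpace ℝ Ωseq)
    (hBres : Bres = B.comp (LinearMap.range (Γ : EuclideanSpace ℝ S →ₗ[ℝ] EuclideanSpace ℝ Sseq)).subtypeL)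
    (hΔres : Δres = Δ.comp (LinearMap.range (Γ : EuclideanSpace ℝ S →ₗ[ℝ] EuclideanSpace ℝ Sseq)).subtypeL)
    (N : (LinearMap.range (Γ : EuclideanSpace ℝ S →ₗ[ℝ] EuclideanSpace ℝ Sseq) : Submodule ℝ (EuclideanSpace ℝ Sseq)) →L[ℝ]
      (LinearMap.range (Γ : EuclideanSpace ℝ S →ₗ[ℝ] EuclideanSpace ℝ Sseq) : Submodule ℝ (EuclideanSpace ℝ Sseq)))
    (hN1 : N.comp ((adjoint Bres).comp Bres) = ContinuousLinearMap.id ℝ _)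
    (hN2 : ((adjoint Bres).comp Bres).comp N = ContinuousLinearMap.id ℝ _)
    (ρ : ℝ) (hΔ : ‖Δ‖ ≤ ρ) (hρ1 : ρ ≤ ‖Bres‖)
    (hρ2 : ρ ≤ -‖Bres‖ + Real.sqrt (‖Bres‖ ^ 2 + (1 / 2) * ‖N‖⁻¹))
    (G : (LinearMap.range (Γ : EuclideanSpace ℝ S →ₗ[ℝ] EuclideanSpace ℝ Sseq) : Submodule ℝ (EuclideanSpace ℝ Sseq))) :
    ∃ M : (LinearMap.range (Γ : EuclideanSpace ℝ S →ₗ[ℝ] EuclideanSpace ℝ Sseq) : Submodule ℝ (EuclideanSpace ℝ Sseq)) →L[ℝ]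
        (LinearMap.range (Γ : EuclideanSpace ℝ S →ₗ[ℝ] EuclideanSpace ℝ Sseq) : Submodule ℝ (EuclideanSpace ℝ Sseq)),
      M.comp ((adjoint (Bres + Δres)).comp (Bres + Δres)) = ContinuousLinearMap.id ℝ _ ∧
      ((adjoint (Bres + Δres)).comp (Bres + Δres)).comp M = ContinuousLinearMap.id ℝ _ ∧
      ‖M ((adjoint (Bres + Δres)) (B (G : EuclideanSpace ℝ Sseq))) - G‖ ≤
        ρ * ‖G‖ * (‖N‖ * ‖Bres‖ * (12 * ‖N‖ * ‖Bres‖ ^ 2 + 1)) :=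
  stmt_18_general B Δ Γ Bres Δres hBres hΔres N hN1 hN2 ρ hΔ hρ2 G
end
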